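/- Let f : 𝔻² → 𝔻 be holomorphic and suppose f(ζ, ζ) = ζ for all ζ ∈ 𝔻. Then the diagonal {(ζ, ζ) : ζ ∈ 𝔻} is contained in the extreme set X(f); that is, for every ζ ∈ 𝔻, 1 − |f(ζ,ζ)|² = (1 − |ζ|²)|f₁(ζ,ζ)| + (1 − |ζ|²)|f₂(ζ,ζ)|. -/

import Mathlib

/-!
Schwarz–Pick on the bidisk: restricting `f` to the analytic disk
`λ ↦ (φ_z λ, φ_w (μ λ))` through `(z, w)`, where `φ_a` is the disk automorphism sending `0` to
`a` and `|μ| = 1`, and applying the Schwarz–Pick inequality at `0` gives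
`|(1 - |z|²) f₁ + μ (1 - |w|²) f₂| ≤ 1 - |f|²`; choosing the phase `μ` turns the left side into
`(1 - |z|²)|f₁| + (1 - |w|²)|f₂|`. So `X(f)` is the equality case of this inequality.
On the diagonal `f₁ + f₂ = 1` and `|f| = |ζ|`, so the triangle inequality gives the reverse bound.
-/

/-- The open unit bidisk in `ℂ²`. -/
def bidisk : Set (ℂ × ℂ) := {p | ‖p.1‖ < 1 ∧ ‖p.2‖ < 1}

/-- The Möbius map `ζ ↦ λ (ζ - a) / (1 - conj a ⬝ ζ)`. -/
noncomputable def mobius (l a : ℂ) (z : ℂ) : ℂ :=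
  l * (z - a) / (1 - (starRingEnd ℂ) a * z)

/-- `φ` is an automorphism of the unit disk: on the disk it agrees with a Möbius map
`ζ ↦ λ (ζ - a)/(1 - conj a ⬝ ζ)` with `|λ| = 1` and `|a| < 1`. -/
def IsDiskAut (φ : ℂ → ℂ) : Prop :=
  ∃ l a : ℂ, ‖l‖ = 1 ∧ ‖a‖ < 1 ∧ ∀ z : ℂ, ‖z‖ < 1 → φ z = mobius l a z

/-- A balanced disk in the bidisk: the image of the unit disk under `ζ ↦ (φ₁ ζ, φ₂ ζ)` for
automorphisms `φ₁, φ₂` of the disk. -/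
def IsBalancedDisk (D : Set (ℂ × ℂ)) : Prop :=
  ∃ φ₁ φ₂ : ℂ → ℂ, IsDiskAut φ₁ ∧ IsDiskAut φ₂ ∧
    D = {p : ℂ × ℂ | ∃ ζ : ℂ, ‖ζ‖ < 1 ∧ p = (φ₁ ζ, φ₂ ζ)}

/-- An extreme disk for `f`: a balanced disk on which the restriction of `f` is an
automorphism of the disk. -/
def IsExtremeDisk (f : ℂ × ℂ → ℂ) (D : Set (ℂ × ℂ)) : Prop :=
  ∃ φ₁ φ₂ : ℂ → ℂ, IsDiskAut φ₁ ∧ IsDiskAut φ₂ ∧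
    D = {p : ℂ × ℂ | ∃ ζ : ℂ, ‖ζ‖ < 1 ∧ p = (φ₁ ζ, φ₂ ζ)} ∧
    IsDiskAut (fun ζ => f (φ₁ ζ, φ₂ ζ))

/-- The extreme set `X(f)` of `f : 𝔻² → 𝔻`: the points of the bidisk at which
`1 - |f(z,w)|² = (1 - |z|²)|f₁(z,w)| + (1 - |w|²)|f₂(z,w)|`. -/
def extremeSet (f : ℂ × ℂ → ℂ) : Set (ℂ × ℂ) :=
  {p ∈ bidisk | 1 - ‖f p‖ ^ 2 =
    (1 - ‖p.1‖ ^ 2) * ‖fderiv ℂ f p (1, 0)‖ + (1 - ‖p.2‖ ^ 2) * ‖fderiv ℂ f p (0, 1)‖}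

open Complex ComplexConjugate Metric Set Filter Topology

variable {l a z : ℂ}

lemma norm_sub_lt_norm_one_sub_conj_mul (ha : ‖a‖ < 1) (hz : ‖z‖ < 1) :
    ‖z - a‖ < ‖1 - conj a * z‖ := by
  have hdiff : normSq (1 - conj a * z) - normSq (z - a) = (1 - normSq a) * (1 - normSq z) := by
    simp only [normSq_apply, sub_re, sub_im, mul_re, mul_im, conj_re, conj_im, one_re, one_im]
    ring
  have ha' : normSq a < 1 := by rw [normSq_eq_norm_sq]; nlinarith [norm_nonneg a]
  have hz' : normSq z < 1 := by rw [normSq_eq_norm_sq]; nlinarith [norm_nonneg z]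
  refine lt_of_pow_lt_pow_left₀ 2 (norm_nonneg _) ?_
  rw [← normSq_eq_norm_sq, ← normSq_eq_norm_sq]
  linarith [mul_pos (sub_pos.mpr ha') (sub_pos.mpr hz')]

lemma one_sub_conj_mul_ne_zero (ha : ‖a‖ < 1) (hz : ‖z‖ < 1) : 1 - conj a * z ≠ 0 :=
  norm_pos_iff.mp ((norm_nonneg _).trans_lt (norm_sub_lt_norm_one_sub_conj_mul ha hz))

lemma norm_mobius_lt_one (hl : ‖l‖ = 1) (ha : ‖a‖ < 1) (hz : ‖z‖ < 1) :
    ‖mobius l a z‖ < 1 := by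
  rw [mobius, norm_div, norm_mul, hl, one_mul,
    div_lt_one (norm_pos_iff.mpr (one_sub_conj_mul_ne_zero ha hz))]
  exact norm_sub_lt_norm_one_sub_conj_mul ha hz

@[simp]
lemma mobius_self : mobius l a a = 0 := by
  simp [mobius]

@[simp]
lemma mobius_one_neg_zero : mobius 1 (-a) 0 = a := by
  simp [mobius]

lemma hasDerivAt_mobius (h : 1 - conj a * z ≠ 0) :
    HasDerivAt (mobius l a) (l * (1 - (‖a‖ : ℂ) ^ 2) / (1 - conj a * z) ^ 2) z := by
  have hnum := ((hasDerivAt_id z).sub_const a).const_mul l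
  have hden := ((hasDerivAt_id z).const_mul (conj a)).const_sub 1
  refine (hnum.div hden h).congr_deriv ?_
  simp only [id, mul_one]
  rw [← conj_mul']
  field_simp
  ring

lemma hasDerivAt_mobius_one_neg_zero :
    HasDerivAt (mobius 1 (-a)) ((1 - ‖a‖ ^ 2 : ℝ) : ℂ) 0 := by
  convert hasDerivAt_mobius (l := 1) (a := -a) (z := 0) (by simp) using 1
  simp

-- Composing with `mobius 1 (g 0)` reduces this to the Schwarz lemma.
theorem norm_deriv_zero_le_one_sub_sq {g : ℂ → ℂ} (hg : DifferentiableOn ℂ g (ball 0 1))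
    (hmaps : MapsTo g (ball 0 1) (ball 0 1)) : ‖deriv g 0‖ ≤ 1 - ‖g 0‖ ^ 2 := by
  set a := g 0
  have ha : ‖a‖ < 1 := mem_ball_zero_iff.mp (hmaps (mem_ball_self one_pos))
  have hg_lt : ∀ z ∈ ball (0 : ℂ) 1, ‖g z‖ < 1 := fun z hz => mem_ball_zero_iff.mp (hmaps hz)
  have hmob : ∀ z ∈ ball (0 : ℂ) 1, HasDerivAt (mobius 1 a)
      (1 * (1 - (‖a‖ : ℂ) ^ 2) / (1 - conj a * g z) ^ 2) (g z) :=
    fun z hz => hasDerivAt_mobius (one_sub_conj_mul_ne_zero ha (hg_lt z hz))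
  have hv : DifferentiableOn ℂ (mobius 1 a ∘ g) (ball 0 1) := fun z hz =>
    (hmob z hz).differentiableAt.comp_differentiableWithinAt z (hg z hz)
  have hv_maps : MapsTo (mobius 1 a ∘ g) (ball 0 1) (closedBall ((mobius 1 a ∘ g) 0) 1) := by
    intro z hz
    rw [Function.comp_apply, mobius_self, mem_closedBall_zero_iff]
    exact (norm_mobius_lt_one norm_one ha (hg_lt z hz)).le
  have hpos : 0 < 1 - ‖a‖ ^ 2 := by nlinarith [norm_nonneg a]
  have hv' : HasDerivAt (mobius 1 a ∘ g) (deriv g 0 / ((1 - ‖a‖ ^ 2 : ℝ) : ℂ)) 0 := by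
    refine ((hmob 0 (mem_ball_self one_pos)).comp 0
      (hg.differentiableAt (ball_mem_nhds 0 one_pos)).hasDerivAt).congr_deriv ?_
    have hc : 1 - conj a * a ≠ 0 := one_sub_conj_mul_ne_zero ha ha
    push_cast
    rw [show g 0 = a from rfl, ← conj_mul']
    field_simp
  have hschwarz := Complex.norm_deriv_le_div_of_mapsTo_ball hv hv_maps one_pos
  rwa [hv'.deriv, norm_div, norm_real, Real.norm_of_nonneg hpos.le, div_one,
    div_le_one hpos] at hschwarz

lemma bidisk_eq_ball : bidisk = ball (0 : ℂ × ℂ) 1 := by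
  ext p
  simp [bidisk, Prod.norm_def]

lemma isOpen_bidisk : IsOpen bidisk :=
  bidisk_eq_ball ▸ isOpen_ball

lemma apply_pair_eq_mul_add_mul (L : ℂ × ℂ →L[ℂ] ℂ) (x y : ℂ) :
    L (x, y) = x * L (1, 0) + y * L (0, 1) := by
  rw [← smul_eq_mul, ← smul_eq_mul, ← map_smul, ← map_smul, ← map_add]
  simp

lemma norm_fderiv_apply_le_one_sub_sq {f : ℂ × ℂ → ℂ} (hf : DifferentiableOn ℂ f bidisk)
    (hmap : ∀ p ∈ bidisk, ‖f p‖ < 1) {p : ℂ × ℂ} (hp : p ∈ bidisk) {μ : ℂ} (hμ : ‖μ‖ = 1) :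
    ‖fderiv ℂ f p (((1 - ‖p.1‖ ^ 2 : ℝ) : ℂ), μ * ((1 - ‖p.2‖ ^ 2 : ℝ) : ℂ))‖ ≤
      1 - ‖f p‖ ^ 2 := by
  set γ : ℂ → ℂ × ℂ := fun z => (mobius 1 (-p.1) z, mobius 1 (-p.2) (μ * z))
  have hneg : ‖-p.1‖ < 1 ∧ ‖-p.2‖ < 1 :=
    ⟨(norm_neg p.1).trans_lt hp.1, (norm_neg p.2).trans_lt hp.2⟩
  have hμz : ∀ z ∈ ball (0 : ℂ) 1, ‖μ * z‖ < 1 := fun z hz => by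
    rwa [norm_mul, hμ, one_mul, ← mem_ball_zero_iff]
  have hγ_maps : MapsTo γ (ball 0 1) bidisk := fun z hz =>
    ⟨norm_mobius_lt_one norm_one hneg.1 (mem_ball_zero_iff.mp hz),
      norm_mobius_lt_one norm_one hneg.2 (hμz z hz)⟩
  have hγ : ∀ z ∈ ball (0 : ℂ) 1, DifferentiableAt ℂ γ z := fun z hz =>
    (hasDerivAt_mobius (l := 1) (one_sub_conj_mul_ne_zero hneg.1
      (mem_ball_zero_iff.mp hz))).differentiableAt.prodMk
      ((hasDerivAt_mobius (l := 1) (one_sub_conj_mul_ne_zero hneg.2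
        (hμz z hz))).differentiableAt.comp z (differentiableAt_id.const_mul μ))
  have hγ0 : γ 0 = p := by simp [γ]
  have hγ' : HasDerivAt γ (((1 - ‖p.1‖ ^ 2 : ℝ) : ℂ), μ * ((1 - ‖p.2‖ ^ 2 : ℝ) : ℂ)) 0 := by
    refine hasDerivAt_mobius_one_neg_zero.prodMk ?_
    rw [mul_comm μ]
    have hscale := (hasDerivAt_id (0 : ℂ)).const_mul μ
    rw [mul_one] at hscale
    exact (mul_zero μ ▸ hasDerivAt_mobius_one_neg_zero).comp 0 hscale
  have hfγ : DifferentiableOn ℂ (f ∘ γ) (ball 0 1) := fun z hz =>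
    ((hf.differentiableAt (isOpen_bidisk.mem_nhds (hγ_maps hz))).comp z
      (hγ z hz)).differentiableWithinAt
  have hfγ_maps : MapsTo (f ∘ γ) (ball 0 1) (ball 0 1) := fun z hz =>
    mem_ball_zero_iff.mpr (hmap _ (hγ_maps hz))
  have hfγ' := (hγ0 ▸ (hf.differentiableAt (isOpen_bidisk.mem_nhds hp)).hasFDerivAt :
    HasFDerivAt f (fderiv ℂ f p) (γ 0)).comp_hasDerivAt 0 hγ'
  simpa [hfγ'.deriv, hγ0] using norm_deriv_zero_le_one_sub_sq hfγ hfγ_maps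

lemma exists_norm_eq_one_norm_add_mul_eq (a b : ℂ) :
    ∃ μ : ℂ, ‖μ‖ = 1 ∧ ‖a + μ * b‖ = ‖a‖ + ‖b‖ := by
  set μ := exp (↑(a.arg - b.arg) * I)
  have hrot : μ * exp (b.arg * I) = exp (a.arg * I) := by
    rw [← exp_add]
    congr 1
    push_cast
    ring
  have hsum : a + μ * b = ((‖a‖ + ‖b‖ : ℝ) : ℂ) * exp (a.arg * I) := by
    rw [ofReal_add]
    linear_combination
      -norm_mul_exp_arg_mul_I a - μ * norm_mul_exp_arg_mul_I b + (‖b‖ : ℂ) * hrot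
  refine ⟨μ, norm_exp_ofReal_mul_I _, ?_⟩
  rw [hsum, norm_mul, norm_exp_ofReal_mul_I, mul_one, norm_real,
    Real.norm_of_nonneg (by positivity)]

theorem schwarz_pick_bidisk {f : ℂ × ℂ → ℂ} (hf : DifferentiableOn ℂ f bidisk)
    (hmap : ∀ p ∈ bidisk, ‖f p‖ < 1) {p : ℂ × ℂ} (hp : p ∈ bidisk) :
    (1 - ‖p.1‖ ^ 2) * ‖fderiv ℂ f p (1, 0)‖ + (1 - ‖p.2‖ ^ 2) * ‖fderiv ℂ f p (0, 1)‖ ≤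
      1 - ‖f p‖ ^ 2 := by
  have hc₁ : 0 ≤ 1 - ‖p.1‖ ^ 2 := by nlinarith [norm_nonneg p.1, hp.1]
  have hc₂ : 0 ≤ 1 - ‖p.2‖ ^ 2 := by nlinarith [norm_nonneg p.2, hp.2]
  obtain ⟨μ, hμ, hphase⟩ := exists_norm_eq_one_norm_add_mul_eq
    (((1 - ‖p.1‖ ^ 2 : ℝ) : ℂ) * fderiv ℂ f p (1, 0))
    (((1 - ‖p.2‖ ^ 2 : ℝ) : ℂ) * fderiv ℂ f p (0, 1))
  have hbound := norm_fderiv_apply_le_one_sub_sq hf hmap hp hμ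
  rwa [apply_pair_eq_mul_add_mul, mul_assoc μ, hphase, norm_mul, norm_mul, norm_real, norm_real,
    Real.norm_of_nonneg hc₁, Real.norm_of_nonneg hc₂] at hbound

lemma fderiv_one_zero_add_fderiv_zero_one_of_diag {f : ℂ × ℂ → ℂ} {ζ : ℂ}
    (hf : DifferentiableAt ℂ f (ζ, ζ)) (hdiag : ∀ᶠ z in 𝓝 ζ, f (z, z) = z) :
    fderiv ℂ f (ζ, ζ) (1, 0) + fderiv ℂ f (ζ, ζ) (0, 1) = 1 := by
  have hchain : HasDerivAt (fun z => f (z, z)) (fderiv ℂ f (ζ, ζ) (1, 1)) ζ :=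
    hf.hasFDerivAt.comp_hasDerivAt (f := fun z => (z, z)) ζ
      ((hasDerivAt_id ζ).prodMk (hasDerivAt_id ζ))
  have hid : HasDerivAt (fun z => f (z, z)) 1 ζ := (hasDerivAt_id ζ).congr_of_eventuallyEq hdiag
  have h11 := hchain.unique hid
  rwa [apply_pair_eq_mul_add_mul, one_mul, one_mul] at h11

/-- If a holomorphic `f : 𝔻² → 𝔻` satisfies `f(ζ,ζ) = ζ` on the disk, then the diagonal is
contained in the extreme set `X(f)`. -/
theorem diagonal_subset_extremeSet (f : ℂ × ℂ → ℂ)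
    (hf : DifferentiableOn ℂ f bidisk) (hmap : ∀ p ∈ bidisk, ‖f p‖ < 1)
    (hdiag : ∀ ζ : ℂ, ‖ζ‖ < 1 → f (ζ, ζ) = ζ) :
    ∀ ζ : ℂ, ‖ζ‖ < 1 →
      1 - ‖f (ζ, ζ)‖ ^ 2 =
        (1 - ‖ζ‖ ^ 2) * ‖fderiv ℂ f (ζ, ζ) (1, 0)‖ +
        (1 - ‖ζ‖ ^ 2) * ‖fderiv ℂ f (ζ, ζ) (0, 1)‖ := by
  intro ζ hζ
  have hp : (ζ, ζ) ∈ bidisk := ⟨hζ, hζ⟩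
  have hupper := schwarz_pick_bidisk hf hmap hp
  have hsum := fderiv_one_zero_add_fderiv_zero_one_of_diag
    (hf.differentiableAt (isOpen_bidisk.mem_nhds hp))
    (eventually_of_mem (isOpen_ball.mem_nhds (mem_ball_zero_iff.mpr hζ))
      fun z hz => hdiag z (mem_ball_zero_iff.mp hz))
  have hlower : 1 ≤ ‖fderiv ℂ f (ζ, ζ) (1, 0)‖ + ‖fderiv ℂ f (ζ, ζ) (0, 1)‖ := by
    simpa [hsum] using norm_add_le (fderiv ℂ f (ζ, ζ) (1, 0)) (fderiv ℂ f (ζ, ζ) (0, 1))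
  have hζ_sq : 0 ≤ 1 - ‖ζ‖ ^ 2 := by nlinarith [norm_nonneg ζ]
  rw [hdiag ζ hζ] at hupper ⊢
  nlinarith
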